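/- arXiv:1507.05894 — 7 statements merged into one kernel-verified Lean document; each statement's English description precedes it below -/
import Mathlib

section
/- In W = W(H, θ, z0, z1), for every h ∈ H and every integer n ≥ 1: u · d^n · ι(h) = d^n · ι(θ(h)·z'_n) · u + d^{n−1} · ι(z̃_n · h). -/
/-!
STATEMENT: In `W = W(H, θ, z0, z1)`, for every `h ∈ H` and every integer `n ≥ 1`:
`u · dⁿ · ι(h) = dⁿ · ι(θ(h)·z′_n) · u + d^{n−1} · ι(z̃_n · h)`.
-/

/-- Generators of the triangular generalized Weyl algebra: a copy of `H` plus `d` and `u`. -/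
inductive GWAGen (H : Type) where
  | base : H → GWAGen H
  | d : GWAGen H
  | u : GWAGen H

/-- The defining relations of the triangular GWA `W(H, θ, z0, z1)`:
`ι` is an `F`-algebra map on the copy of `H`, `u·h = θ(h)·u`, `h·d = d·θ(h)`,
and `u·d = z0 + d·z1·u`. -/
inductive GWARel (F : Type) [Field F] (H : Type) [CommRing H] [Algebra F H]
    (θ : H ≃ₐ[F] H) (z0 z1 : H) :
    FreeAlgebra F (GWAGen H) → FreeAlgebra F (GWAGen H) → Prop
  | base_one : GWARel F H θ z0 z1 (FreeAlgebra.ι F (GWAGen.base (1 : H))) 1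
  | base_add (a b : H) : GWARel F H θ z0 z1
      (FreeAlgebra.ι F (GWAGen.base (a + b)))
      (FreeAlgebra.ι F (GWAGen.base a) + FreeAlgebra.ι F (GWAGen.base b))
  | base_mul (a b : H) : GWARel F H θ z0 z1
      (FreeAlgebra.ι F (GWAGen.base (a * b)))
      (FreeAlgebra.ι F (GWAGen.base a) * FreeAlgebra.ι F (GWAGen.base b))
  | base_smul (r : F) (a : H) : GWARel F H θ z0 z1
      (FreeAlgebra.ι F (GWAGen.base (r • a)))
      (r • FreeAlgebra.ι F (GWAGen.base a))
  | u_comm (a : H) : GWARel F H θ z0 z1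
      (FreeAlgebra.ι F GWAGen.u * FreeAlgebra.ι F (GWAGen.base a))
      (FreeAlgebra.ι F (GWAGen.base (θ a)) * FreeAlgebra.ι F GWAGen.u)
  | d_comm (a : H) : GWARel F H θ z0 z1
      (FreeAlgebra.ι F (GWAGen.base a) * FreeAlgebra.ι F GWAGen.d)
      (FreeAlgebra.ι F GWAGen.d * FreeAlgebra.ι F (GWAGen.base (θ a)))
  | ud : GWARel F H θ z0 z1
      (FreeAlgebra.ι F GWAGen.u * FreeAlgebra.ι F GWAGen.d)
      (FreeAlgebra.ι F (GWAGen.base z0) +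
        FreeAlgebra.ι F GWAGen.d * FreeAlgebra.ι F (GWAGen.base z1) * FreeAlgebra.ι F GWAGen.u)

/-- The triangular generalized Weyl algebra `W(H, θ, z0, z1)`, realized as a
`RingQuot` of the free `F`-algebra on the generators. -/
abbrev GWA (F : Type) [Field F] (H : Type) [CommRing H] [Algebra F H]
    (θ : H ≃ₐ[F] H) (z0 z1 : H) : Type :=
  RingQuot (GWARel F H θ z0 z1)

variable (F : Type) [Field F] (H : Type) [CommRing H] [Algebra F H]
variable (θ : H ≃ₐ[F] H) (z0 z1 : H)

/-- The canonical map `ι : H → W`. -/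
noncomputable def GWA.incl (h : H) : GWA F H θ z0 z1 :=
  RingQuot.mkAlgHom F (GWARel F H θ z0 z1) (FreeAlgebra.ι F (GWAGen.base h))

/-- The element `d` of `W`. -/
noncomputable def GWA.dd : GWA F H θ z0 z1 :=
  RingQuot.mkAlgHom F (GWARel F H θ z0 z1) (FreeAlgebra.ι F GWAGen.d)

/-- The element `u` of `W`. -/
noncomputable def GWA.uu : GWA F H θ z0 z1 :=
  RingQuot.mkAlgHom F (GWARel F H θ z0 z1) (FreeAlgebra.ι F GWAGen.u)

/-- `z'_n = ∏_{i=0}^{n-1} θ^i(z1)`. -/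
noncomputable def zp (n : ℕ) : H := ∏ i ∈ Finset.range n, (θ ^ i) z1

/-- `z̃_n = ∑_{i=0}^{n-1} θ^i(z0 · z'_{n-1-i})`. -/
noncomputable def zt (n : ℕ) : H := ∑ i ∈ Finset.range n, (θ ^ i) (z0 * zp F H θ z1 (n - 1 - i))

lemma GWA.incl_mul (a b : H) :
    GWA.incl F H θ z0 z1 (a * b) = GWA.incl F H θ z0 z1 a * GWA.incl F H θ z0 z1 b := by
  unfold GWA.incl
  rw [← map_mul]
  exact RingQuot.mkAlgHom_rel F (GWARel.base_mul a b)

lemma GWA.incl_one : GWA.incl F H θ z0 z1 1 = 1 := by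
  unfold GWA.incl
  rw [← map_one (RingQuot.mkAlgHom F (GWARel F H θ z0 z1))]
  exact RingQuot.mkAlgHom_rel F GWARel.base_one

lemma GWA.incl_add (a b : H) :
    GWA.incl F H θ z0 z1 (a + b) = GWA.incl F H θ z0 z1 a + GWA.incl F H θ z0 z1 b := by
  unfold GWA.incl
  rw [← map_add]
  exact RingQuot.mkAlgHom_rel F (GWARel.base_add a b)

lemma GWA.u_comm (a : H) :
    GWA.uu F H θ z0 z1 * GWA.incl F H θ z0 z1 a =
      GWA.incl F H θ z0 z1 (θ a) * GWA.uu F H θ z0 z1 := by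
  unfold GWA.uu GWA.incl
  rw [← map_mul, ← map_mul]
  exact RingQuot.mkAlgHom_rel F (GWARel.u_comm a)

lemma GWA.d_comm (a : H) :
    GWA.incl F H θ z0 z1 a * GWA.dd F H θ z0 z1 =
      GWA.dd F H θ z0 z1 * GWA.incl F H θ z0 z1 (θ a) := by
  unfold GWA.dd GWA.incl
  rw [← map_mul, ← map_mul]
  exact RingQuot.mkAlgHom_rel F (GWARel.d_comm a)

lemma GWA.ud :
    GWA.uu F H θ z0 z1 * GWA.dd F H θ z0 z1 =
      GWA.incl F H θ z0 z1 z0 +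
        GWA.dd F H θ z0 z1 * GWA.incl F H θ z0 z1 z1 * GWA.uu F H θ z0 z1 := by
  unfold GWA.uu GWA.dd GWA.incl
  rw [← map_mul, ← map_mul, ← map_mul, ← map_add]
  exact RingQuot.mkAlgHom_rel F GWARel.ud

lemma theta_pow_succ (i : ℕ) (a : H) : (θ ^ (i + 1)) a = θ ((θ ^ i) a) := by
  rw [pow_succ', AlgEquiv.mul_apply]

lemma zp_succ (n : ℕ) : zp F H θ z1 (n + 1) = θ (zp F H θ z1 n) * z1 := by
  unfold zp
  rw [Finset.prod_range_succ', map_prod]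
  simp [theta_pow_succ]

lemma zt_succ (n : ℕ) :
    zt F H θ z0 z1 (n + 1) = z0 * zp F H θ z1 n + θ (zt F H θ z0 z1 n) := by
  unfold zt
  rw [Finset.sum_range_succ', map_sum, add_comm]
  congr 1
  · refine Finset.sum_congr rfl fun i _ => ?_
    rw [theta_pow_succ]
    have e : n + 1 - 1 - (i + 1) = n - 1 - i := by omega
    rw [e]

lemma key (n : ℕ) :
    GWA.uu F H θ z0 z1 * (GWA.dd F H θ z0 z1) ^ (n + 1) =
      (GWA.dd F H θ z0 z1) ^ (n + 1) * GWA.incl F H θ z0 z1 (zp F H θ z1 (n + 1)) *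
          GWA.uu F H θ z0 z1 +
        (GWA.dd F H θ z0 z1) ^ n * GWA.incl F H θ z0 z1 (zt F H θ z0 z1 n.succ) := by
  set d := GWA.dd F H θ z0 z1 with hdd
  set u := GWA.uu F H θ z0 z1 with huu
  set I := GWA.incl F H θ z0 z1 with hII
  induction n with
  | zero =>
      have h1 : zp F H θ z1 1 = z1 := by simp [zp]
      have h2 : zt F H θ z0 z1 1 = z0 := by simp [zt, zp]
      show u * d ^ 1 = d ^ 1 * I (zp F H θ z1 1) * u + d ^ 0 * I (zt F H θ z0 z1 1)
      rw [h1, h2, pow_one, pow_zero, one_mul, hdd, huu, hII, GWA.ud, add_comm]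
  | succ n ih =>
      set zpS := zp F H θ z1 (n + 1) with hzpS
      set ztS := zt F H θ z0 z1 (n + 1) with hztS
      have hud : u * d = I z0 + d * I z1 * u := GWA.ud F H θ z0 z1
      have hdc : ∀ a : H, I a * d = d * I (θ a) := GWA.d_comm F H θ z0 z1
      have him : ∀ a b : H, I (a * b) = I a * I b := GWA.incl_mul F H θ z0 z1
      have hia : ∀ a b : H, I (a + b) = I a + I b := GWA.incl_add F H θ z0 z1
      calc u * d ^ (n + 1 + 1)
          = (u * d ^ (n + 1)) * d := by rw [pow_succ, mul_assoc]
        _ = (d ^ (n + 1) * I zpS * u + d ^ n * I ztS) * d := by rw [ih]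
        _ = d ^ (n + 1) * I zpS * (u * d) + d ^ n * (I ztS * d) := by noncomm_ring
        _ = d ^ (n + 1) * I zpS * (I z0 + d * I z1 * u) + d ^ n * (d * I (θ ztS)) := by
            rw [hud, hdc]
        _ = d ^ (n + 1) * (I zpS * I z0) + d ^ (n + 1) * ((I zpS * d) * (I z1 * u))
              + d ^ (n + 1) * I (θ ztS) := by rw [pow_succ]; noncomm_ring
        _ = d ^ (n + 1) * I (z0 * zpS) + d ^ (n + 1) * ((d * I (θ zpS)) * (I z1 * u))
              + d ^ (n + 1) * I (θ ztS) := by rw [hdc, ← him, mul_comm zpS z0]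
        _ = d ^ (n + 1 + 1) * (I (θ zpS) * I z1) * u
              + d ^ (n + 1) * (I (z0 * zpS) + I (θ ztS)) := by rw [pow_succ]; noncomm_ring
        _ = d ^ (n + 1 + 1) * I (zp F H θ z1 (n + 1 + 1)) * u
              + d ^ (n + 1) * I (zt F H θ z0 z1 (n + 1 + 1)) := by
            rw [zp_succ F H θ z1 (n + 1), zt_succ F H θ z0 z1 (n + 1), ← hzpS, ← hztS,
              him, hia, him, him]

theorem u_mul_dpow_mul_incl (h : H) (n : ℕ) (hn : 1 ≤ n) :
    GWA.uu F H θ z0 z1 * (GWA.dd F H θ z0 z1) ^ n * GWA.incl F H θ z0 z1 h =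
      (GWA.dd F H θ z0 z1) ^ n * GWA.incl F H θ z0 z1 (θ h * zp F H θ z1 n) *
          GWA.uu F H θ z0 z1 +
        (GWA.dd F H θ z0 z1) ^ (n - 1) * GWA.incl F H θ z0 z1 (zt F H θ z0 z1 n * h) := by
  obtain ⟨m, rfl⟩ : ∃ m, n = m + 1 := ⟨n - 1, by omega⟩
  set d := GWA.dd F H θ z0 z1 with hdd
  set u := GWA.uu F H θ z0 z1 with huu
  set I := GWA.incl F H θ z0 z1 with hII
  have huc : ∀ a : H, u * I a = I (θ a) * u := GWA.u_comm F H θ z0 z1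
  have him : ∀ a b : H, I (a * b) = I a * I b := GWA.incl_mul F H θ z0 z1
  simp only [Nat.add_sub_cancel]
  calc u * d ^ (m + 1) * I h
      = (d ^ (m + 1) * I (zp F H θ z1 (m + 1)) * u + d ^ m * I (zt F H θ z0 z1 (m + 1)))
          * I h := by rw [key]
    _ = d ^ (m + 1) * I (zp F H θ z1 (m + 1)) * (u * I h)
          + d ^ m * (I (zt F H θ z0 z1 (m + 1)) * I h) := by noncomm_ring
    _ = d ^ (m + 1) * (I (zp F H θ z1 (m + 1)) * I (θ h)) * u
          + d ^ m * (I (zt F H θ z0 z1 (m + 1)) * I h) := by rw [huc]; noncomm_ring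
    _ = d ^ (m + 1) * I (θ h * zp F H θ z1 (m + 1)) * u
          + d ^ m * I (zt F H θ z0 z1 (m + 1) * h) := by
        rw [← him, ← him, mul_comm (zp F H θ z1 (m + 1)) (θ h)]
end

section
/- In W = W(H, θ, z0, z1), for every integer n ≥ 1 and all h_1, …, h_n ∈ H, the element ∏_{i=1}^n (d·ι(h_i)·u) − d^n · ι( θ^{n−1}(h_1⋯h_n) · ∏_{i=0}^{n−1} θ^i(z'_{n−1−i}) ) · u^n lies in the F-linear span of { d^i · ι(h) · u^i : 1 ≤ i ≤ n−1, h ∈ H }. -/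
variable (F : Type) [Field F] (H : Type) [CommRing H] [Algebra F H]
variable (θ : H ≃ₐ[F] H) (z0 z1 : H)

section Aux

local notation "DD" => GWA.dd F H θ z0 z1
local notation "UU" => GWA.uu F H θ z0 z1
local notation "II" => GWA.incl F H θ z0 z1
local notation "ZP" => zp F H θ z1

private theorem incl_mul (a b : H) : II (a * b) = II a * II b := by
  have := RingQuot.mkAlgHom_rel F (GWARel.base_mul (F:=F) (H:=H) (θ:=θ) (z0:=z0) (z1:=z1) a b)
  simpa [GWA.incl, map_mul] using this

private theorem incl_add (a b : H) : II (a + b) = II a + II b := by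
  have := RingQuot.mkAlgHom_rel F (GWARel.base_add (F:=F) (H:=H) (θ:=θ) (z0:=z0) (z1:=z1) a b)
  simpa [GWA.incl, map_add] using this

private theorem incl_one : II (1 : H) = 1 := by
  have := RingQuot.mkAlgHom_rel F (GWARel.base_one (F:=F) (H:=H) (θ:=θ) (z0:=z0) (z1:=z1))
  simpa [GWA.incl, map_one] using this

private theorem u_incl (a : H) : UU * II a = II (θ a) * UU := by
  have := RingQuot.mkAlgHom_rel F (GWARel.u_comm (F:=F) (H:=H) (θ:=θ) (z0:=z0) (z1:=z1) a)
  simpa [GWA.incl, GWA.uu, map_mul] using this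

private theorem incl_d (a : H) : II a * DD = DD * II (θ a) := by
  have := RingQuot.mkAlgHom_rel F (GWARel.d_comm (F:=F) (H:=H) (θ:=θ) (z0:=z0) (z1:=z1) a)
  simpa [GWA.incl, GWA.dd, map_mul] using this

private theorem ud_rel : UU * DD = II z0 + DD * II z1 * UU := by
  have := RingQuot.mkAlgHom_rel F (GWARel.ud (F:=F) (H:=H) (θ:=θ) (z0:=z0) (z1:=z1))
  simpa [GWA.incl, GWA.dd, GWA.uu, map_mul, map_add] using this

private theorem up_incl (k : ℕ) (a : H) : UU ^ k * II a = II ((θ ^ k) a) * UU ^ k := by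
  induction k generalizing a with
  | zero => simp
  | succ k ih =>
    have h1 : UU ^ (k + 1) * II a = UU ^ k * (UU * II a) := by rw [pow_succ, mul_assoc]
    rw [h1, u_incl, ← mul_assoc, ih (θ a), mul_assoc, ← pow_succ]
    have h2 : (θ ^ (k + 1)) a = (θ ^ k) (θ a) := by rw [pow_succ, AlgEquiv.mul_apply]
    rw [h2]

private theorem zp_succ' (k : ℕ) : ZP (k + 1) = θ (ZP k) * z1 := by
  simp only [zp, Finset.prod_range_succ', pow_zero, AlgEquiv.one_apply, map_prod]
  congr 1
  refine Finset.prod_congr rfl fun i _ => ?_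
  rw [pow_succ', AlgEquiv.mul_apply]

private theorem u_pow_d (k : ℕ) (hk : 1 ≤ k) :
    ∃ c : H, UU ^ k * DD = DD * II (ZP k) * UU ^ k + II c * UU ^ (k - 1) := by
  induction k, hk using Nat.le_induction with
  | base =>
    refine ⟨z0, ?_⟩
    have h1 : ZP 1 = z1 := by simp [zp]
    simp only [pow_one, Nat.sub_self, pow_zero, mul_one, h1]
    rw [ud_rel, add_comm]
  | succ k hk ih =>
    obtain ⟨c, hc⟩ := ih
    refine ⟨z0 * ZP k + θ c, ?_⟩
    have h1 : UU ^ (k + 1) * DD = UU * (UU ^ k * DD) := by rw [pow_succ', mul_assoc]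
    rw [h1, hc, mul_add]
    have t1 : UU * (DD * II (ZP k) * UU ^ k) =
        DD * II (ZP (k + 1)) * UU ^ (k + 1) + II (z0 * ZP k) * UU ^ k := by
      calc UU * (DD * II (ZP k) * UU ^ k)
          = (UU * DD) * (II (ZP k) * UU ^ k) := by simp only [mul_assoc]
        _ = II z0 * (II (ZP k) * UU ^ k) + DD * II z1 * UU * (II (ZP k) * UU ^ k) := by
            rw [ud_rel, add_mul]
        _ = DD * II (ZP (k + 1)) * UU ^ (k + 1) + II (z0 * ZP k) * UU ^ k := by
            rw [add_comm]
            congr 1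
            · calc DD * II z1 * UU * (II (ZP k) * UU ^ k)
                  = DD * (II z1 * ((UU * II (ZP k)) * UU ^ k)) := by simp only [mul_assoc]
                _ = DD * (II z1 * ((II (θ (ZP k)) * UU) * UU ^ k)) := by rw [u_incl]
                _ = DD * ((II z1 * II (θ (ZP k))) * (UU * UU ^ k)) := by simp only [mul_assoc]
                _ = DD * (II (ZP (k + 1)) * UU ^ (k + 1)) := by
                    rw [← incl_mul, ← pow_succ', zp_succ', mul_comm z1 (θ (ZP k))]
                _ = DD * II (ZP (k + 1)) * UU ^ (k + 1) := by rw [mul_assoc]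
            · rw [incl_mul, mul_assoc]
    have t2 : UU * (II c * UU ^ (k - 1)) = II (θ c) * UU ^ k := by
      rw [← mul_assoc, u_incl, mul_assoc, ← pow_succ', Nat.sub_add_cancel hk]
    rw [t1, t2, add_assoc, incl_add, add_mul]
    simp only [Nat.add_sub_cancel]

private theorem du_step (i : ℕ) (hi : 1 ≤ i) (a b : H) :
    ∃ c : H, DD ^ i * II a * UU ^ i * (DD * II b * UU) =
      DD ^ (i + 1) * II (θ a * ZP i * (θ ^ i) b) * UU ^ (i + 1) + DD ^ i * II c * UU ^ i := by
  obtain ⟨c, hc⟩ := u_pow_d F H θ z0 z1 i hi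
  refine ⟨a * c * (θ ^ (i - 1)) b, ?_⟩
  calc DD ^ i * II a * UU ^ i * (DD * II b * UU)
      = DD ^ i * II a * (UU ^ i * DD) * (II b * UU) := by simp only [mul_assoc]
    _ = DD ^ i * II a * (DD * II (ZP i) * UU ^ i) * (II b * UU)
        + DD ^ i * II a * (II c * UU ^ (i - 1)) * (II b * UU) := by
        rw [hc, mul_add, add_mul]
    _ = DD ^ (i + 1) * II (θ a * ZP i * (θ ^ i) b) * UU ^ (i + 1)
        + DD ^ i * II (a * c * (θ ^ (i - 1)) b) * UU ^ i := by
        congr 1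
        · calc DD ^ i * II a * (DD * II (ZP i) * UU ^ i) * (II b * UU)
              = DD ^ i * ((II a * DD) * (II (ZP i) * ((UU ^ i * II b) * UU))) := by
                simp only [mul_assoc]
            _ = DD ^ i * ((DD * II (θ a)) * (II (ZP i) * ((II ((θ ^ i) b) * UU ^ i) * UU))) := by
                rw [incl_d, up_incl]
            _ = (DD ^ i * DD) * (((II (θ a) * II (ZP i)) * II ((θ ^ i) b)) * (UU ^ i * UU)) := by
                simp only [mul_assoc]
            _ = DD ^ (i + 1) * II (θ a * ZP i * (θ ^ i) b) * UU ^ (i + 1) := by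
                rw [← pow_succ, ← pow_succ]
                simp only [← incl_mul]
                simp only [mul_assoc]
        · calc DD ^ i * II a * (II c * UU ^ (i - 1)) * (II b * UU)
              = DD ^ i * (II a * (II c * ((UU ^ (i - 1) * II b) * UU))) := by
                simp only [mul_assoc]
            _ = DD ^ i * (II a * (II c * ((II ((θ ^ (i - 1)) b) * UU ^ (i - 1)) * UU))) := by
                rw [up_incl]
            _ = (DD ^ i * ((II a * II c) * II ((θ ^ (i - 1)) b))) * (UU ^ (i - 1) * UU) := by
                simp only [mul_assoc]
            _ = DD ^ i * II (a * c * (θ ^ (i - 1)) b) * UU ^ i := by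
                rw [← incl_mul, ← incl_mul, ← pow_succ, Nat.sub_add_cancel hi]

private noncomputable def Cform (n : ℕ) (h : Fin n → H) : H :=
  (θ ^ (n - 1)) (∏ i, h i) * ∏ i ∈ Finset.range n, (θ ^ i) (zp F H θ z1 (n - 1 - i))

private theorem Cform_succ (n : ℕ) (hn : 1 ≤ n) (h : Fin (n + 1) → H) :
    θ (Cform F H θ z1 n (fun i => h i.castSucc)) * ZP n * (θ ^ n) (h (Fin.last n)) =
      Cform F H θ z1 (n + 1) h := by
  unfold Cform
  rw [Fin.prod_univ_castSucc, Nat.add_sub_cancel, Finset.prod_range_succ']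
  simp only [pow_zero, AlgEquiv.one_apply, Nat.sub_zero, map_mul, map_prod]
  have e1 : ∀ y : H, θ ((θ ^ (n - 1)) y) = (θ ^ n) y := by
    intro y
    rw [← AlgEquiv.mul_apply, ← pow_succ', Nat.sub_add_cancel hn]
  have e2 : ∀ i : ℕ,
      θ ((θ ^ i) (zp F H θ z1 (n - 1 - i))) = (θ ^ (i + 1)) (zp F H θ z1 (n - (i + 1))) := by
    intro i
    rw [← AlgEquiv.mul_apply, ← pow_succ']
    congr 2
    omega
  rw [Finset.prod_congr rfl fun x _ => e1 (h x.castSucc)]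
  rw [Finset.prod_congr rfl fun i _ => e2 i]
  ring

private theorem key_s4 (n : ℕ) (hn : 1 ≤ n) (h : Fin n → H) :
    ∃ r ∈ Submodule.span F
      { x : GWA F H θ z0 z1 | ∃ i : ℕ, ∃ a : H, 1 ≤ i ∧ i ≤ n - 1 ∧
          x = DD ^ i * II a * UU ^ i },
    (List.ofFn fun i : Fin n => DD * II (h i) * UU).prod =
      DD ^ n * II (Cform F H θ z1 n h) * UU ^ n + r := by
  induction n, hn using Nat.le_induction with
  | base =>
    refine ⟨0, Submodule.zero_mem _, ?_⟩
    have e1 : Cform F H θ z1 1 h = h 0 := by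
      simp [Cform, zp, Fin.prod_univ_one]
    simp [e1, List.ofFn_succ]
  | succ n hn ih =>
    obtain ⟨r, hrmem, hr⟩ := ih (fun i => h i.castSucc)
    rw [List.ofFn_succ', List.prod_concat, hr, add_mul]
    obtain ⟨c, hc⟩ := du_step F H θ z0 z1 n hn (Cform F H θ z1 n (fun i => h i.castSucc))
      (h (Fin.last n))
    rw [hc, Cform_succ F H θ z1 n hn h]
    refine ⟨DD ^ n * II c * UU ^ n + r * (DD * II (h (Fin.last n)) * UU), ?_,
      by rw [add_assoc]⟩
    refine Submodule.add_mem _ ?_ ?_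
    · exact Submodule.subset_span ⟨n, c, hn, by omega, rfl⟩
    · refine Submodule.span_induction
        (p := fun x _ => x * (DD * II (h (Fin.last n)) * UU) ∈ Submodule.span F
          { x : GWA F H θ z0 z1 | ∃ i : ℕ, ∃ a : H, 1 ≤ i ∧ i ≤ n + 1 - 1 ∧
              x = DD ^ i * II a * UU ^ i })
        ?_ ?_ ?_ ?_ hrmem
      · rintro x ⟨i, a, hi1, hi2, rfl⟩
        obtain ⟨c', hc'⟩ := du_step F H θ z0 z1 i hi1 a (h (Fin.last n))
        rw [hc']
        refine Submodule.add_mem _ ?_ ?_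
        · exact Submodule.subset_span ⟨i + 1, _, by omega, by omega, rfl⟩
        · exact Submodule.subset_span ⟨i, c', hi1, by omega, rfl⟩
      · simp
      · intro x y _ _ hx hy
        rw [add_mul]
        exact Submodule.add_mem _ hx hy
      · intro α x _ hx
        rw [smul_mul_assoc]
        exact Submodule.smul_mem _ _ hx

end Aux

theorem prod_d_incl_u_sub_leading_mem_span (n : ℕ) (hn : 1 ≤ n) (h : Fin n → H) :
    (List.ofFn fun i : Fin n =>
        GWA.dd F H θ z0 z1 * GWA.incl F H θ z0 z1 (h i) * GWA.uu F H θ z0 z1).prod -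
      (GWA.dd F H θ z0 z1) ^ n *
        GWA.incl F H θ z0 z1
          ((θ ^ (n - 1)) (∏ i, h i) * ∏ i ∈ Finset.range n, (θ ^ i) (zp F H θ z1 (n - 1 - i))) *
        (GWA.uu F H θ z0 z1) ^ n ∈
    Submodule.span F
      { x : GWA F H θ z0 z1 | ∃ i : ℕ, ∃ a : H, 1 ≤ i ∧ i ≤ n - 1 ∧
          x = (GWA.dd F H θ z0 z1) ^ i * GWA.incl F H θ z0 z1 a * (GWA.uu F H θ z0 z1) ^ i } := by
  obtain ⟨r, hrmem, hr⟩ := key_s4 F H θ z0 z1 n hn h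
  rw [hr]
  have : GWA.incl F H θ z0 z1 (Cform F H θ z1 n h) =
      GWA.incl F H θ z0 z1
        ((θ ^ (n - 1)) (∏ i, h i) * ∏ i ∈ Finset.range n, (θ ^ i) (zp F H θ z1 (n - 1 - i))) := rfl
  rw [← this, add_sub_cancel_left]
  exact hrmem
end

section
/- In W = W(H, θ, z0, z1), for all i, j, k, l ∈ ℕ and all h, h' ∈ H, the product (d^i · ι(h) · u^j) · (d^k · ι(h') · u^l) lies in the F-linear span of { d^{i+k−t} · ι(h'') · u^{j+l−t} : 0 ≤ t ≤ min(j,k), h'' ∈ H }. -/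
variable (F : Type) [Field F] (H : Type) [CommRing H] [Algebra F H]
variable (θ : H ≃ₐ[F] H) (z0 z1 : H)

namespace GWAProof

variable {F : Type} [Field F] {H : Type} [CommRing H] [Algebra F H]
variable {θ : H ≃ₐ[F] H} {z0 z1 : H}

local notation "W" => GWA F H θ z0 z1
local notation "D" => GWA.dd F H θ z0 z1
local notation "U" => GWA.uu F H θ z0 z1
local notation "ι'" => GWA.incl F H θ z0 z1

lemma incl_mul (a b : H) : ι' (a * b) = ι' a * ι' b :=
  (RingQuot.mkAlgHom_rel F (GWARel.base_mul (θ := θ) (z0 := z0) (z1 := z1) a b)).trans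
    (map_mul _ _ _)

lemma incl_one : ι' (1 : H) = 1 :=
  (RingQuot.mkAlgHom_rel F (GWARel.base_one (θ := θ) (z0 := z0) (z1 := z1))).trans
    (map_one _)

lemma u_incl (a : H) : U * ι' a = ι' (θ a) * U := by
  have := RingQuot.mkAlgHom_rel F (GWARel.u_comm (θ := θ) (z0 := z0) (z1 := z1) a)
  simpa [map_mul, GWA.incl, GWA.uu] using this

lemma incl_d (a : H) : ι' a * D = D * ι' (θ a) := by
  have := RingQuot.mkAlgHom_rel F (GWARel.d_comm (θ := θ) (z0 := z0) (z1 := z1) a)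
  simpa [map_mul, GWA.incl, GWA.dd] using this

lemma ud_rel : U * D = ι' z0 + D * ι' z1 * U := by
  have := RingQuot.mkAlgHom_rel F (GWARel.ud (θ := θ) (z0 := z0) (z1 := z1))
  simpa [map_mul, map_add, GWA.incl, GWA.dd, GWA.uu] using this

lemma upow_incl (m : ℕ) (a : H) : U ^ m * ι' a = ι' ((⇑θ)^[m] a) * U ^ m := by
  induction m with
  | zero => simp
  | succ n ih =>
    rw [pow_succ', mul_assoc, ih, ← mul_assoc, u_incl, mul_assoc, ← pow_succ',
      Function.iterate_succ_apply']

lemma incl_dpow (m : ℕ) (a : H) : ι' a * D ^ m = D ^ m * ι' ((⇑θ)^[m] a) := by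
  induction m with
  | zero => simp
  | succ n ih =>
    rw [pow_succ, ← mul_assoc, ih, mul_assoc, incl_d, ← mul_assoc, ← pow_succ,
      Function.iterate_succ_apply']

/-- Multiplying a monomial on the right by `ι h' * U^c`. -/
lemma mono_mul (a b c : ℕ) (g h' : H) :
    (D ^ a * ι' g * U ^ b) * (ι' h' * U ^ c) =
      D ^ a * ι' (g * (⇑θ)^[b] h') * U ^ (b + c) := by
  have h1 : (D ^ a * ι' g * U ^ b) * (ι' h' * U ^ c) =
      D ^ a * ι' g * (U ^ b * ι' h') * U ^ c := by noncomm_ring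
  rw [h1, upow_incl, incl_mul, pow_add]
  noncomm_ring

/-- Multiplying a monomial on the left by `D^a * ι g`. -/
lemma mono_mul_left (a b c : ℕ) (g h' : H) :
    (D ^ a * ι' g) * (D ^ b * ι' h' * U ^ c) =
      D ^ (a + b) * ι' ((⇑θ)^[b] g * h') * U ^ c := by
  have h1 : (D ^ a * ι' g) * (D ^ b * ι' h' * U ^ c) =
      D ^ a * (ι' g * D ^ b) * ι' h' * U ^ c := by noncomm_ring
  rw [h1, incl_dpow, incl_mul, pow_add]
  noncomm_ring

lemma u_dpow (m : ℕ) :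
    U * D ^ m ∈ Submodule.span F
      { x : W | ∃ s : ℕ, ∃ g : H, s ≤ min 1 m ∧ x = D ^ (m - s) * ι' g * U ^ (1 - s) } := by
  induction m with
  | zero =>
    apply Submodule.subset_span
    exact ⟨0, 1, by simp, by simp [incl_one]⟩
  | succ n ih =>
    have key : U * D ^ (n + 1) = ι' z0 * D ^ n + (D * ι' z1) * (U * D ^ n) := by
      rw [pow_succ', ← mul_assoc, ud_rel]
      noncomm_ring
    rw [key]
    apply Submodule.add_mem
    · apply Submodule.subset_span
      refine ⟨1, (⇑θ)^[n] z0, le_min le_rfl (by omega), ?_⟩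
      rw [incl_dpow]
      simp
    · refine Submodule.span_induction (p := fun x _ => (D * ι' z1) * x ∈ _)
        ?_ ?_ ?_ ?_ ih
      · rintro x ⟨s, g, hs, rfl⟩
        have hs1 : s ≤ 1 := le_trans hs (min_le_left _ _)
        have hs2 : s ≤ n := le_trans hs (min_le_right _ _)
        apply Submodule.subset_span
        refine ⟨s, (⇑θ)^[n - s] z1 * g, le_min hs1 (by omega), ?_⟩
        rw [show (D * ι' z1) = D ^ 1 * ι' z1 from by rw [pow_one], mono_mul_left,
          show 1 + (n - s) = n + 1 - s from by omega]
      · simp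
      · intro x y _ _ hx hy
        rw [mul_add]; exact Submodule.add_mem _ hx hy
      · intro r x _ hx
        rw [mul_smul_comm]; exact Submodule.smul_mem _ _ hx

lemma upow_dpow (j k : ℕ) :
    U ^ j * D ^ k ∈ Submodule.span F
      { x : W | ∃ t : ℕ, ∃ g : H, t ≤ min j k ∧ x = D ^ (k - t) * ι' g * U ^ (j - t) } := by
  induction j with
  | zero =>
    apply Submodule.subset_span
    exact ⟨0, 1, by simp, by simp [incl_one]⟩
  | succ n ih =>
    have key : U ^ (n + 1) * D ^ k = U * (U ^ n * D ^ k) := by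
      rw [pow_succ', mul_assoc]
    rw [key]
    refine Submodule.span_induction (p := fun x _ => U * x ∈ _) ?_ ?_ ?_ ?_ ih
    · rintro x ⟨t, g, ht, rfl⟩
      have ht1 : t ≤ n := le_trans ht (min_le_left _ _)
      have ht2 : t ≤ k := le_trans ht (min_le_right _ _)
      have hx : U * (D ^ (k - t) * ι' g * U ^ (n - t)) =
          (U * D ^ (k - t)) * (ι' g * U ^ (n - t)) := by noncomm_ring
      rw [hx]
      refine Submodule.span_induction (p := fun y _ => y * (ι' g * U ^ (n - t)) ∈ _)
        ?_ ?_ ?_ ?_ (u_dpow (k - t))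
      · rintro y ⟨s, g', hs, rfl⟩
        have hs1 : s ≤ 1 := le_trans hs (min_le_left _ _)
        have hs2 : s ≤ k - t := le_trans hs (min_le_right _ _)
        apply Submodule.subset_span
        refine ⟨t + s, g' * (⇑θ)^[1 - s] g, le_min (by omega) (by omega), ?_⟩
        rw [mono_mul, show k - t - s = k - (t + s) from by omega,
          show 1 - s + (n - t) = n + 1 - (t + s) from by omega]
      · simp
      · intro x y _ _ hx hy
        rw [add_mul]; exact Submodule.add_mem _ hx hy
      · intro r x _ hx
        rw [smul_mul_assoc]; exact Submodule.smul_mem _ _ hx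
    · simp
    · intro x y _ _ hx hy
      rw [mul_add]; exact Submodule.add_mem _ hx hy
    · intro r x _ hx
      rw [mul_smul_comm]; exact Submodule.smul_mem _ _ hx

lemma main (i j k l : ℕ) (h h' : H) :
    (D ^ i * ι' h * U ^ j) * (D ^ k * ι' h' * U ^ l) ∈
    Submodule.span F
      { x : W | ∃ t : ℕ, ∃ h'' : H, t ≤ min j k ∧
          x = D ^ (i + k - t) * ι' h'' * U ^ (j + l - t) } := by
  have key : (D ^ i * ι' h * U ^ j) * (D ^ k * ι' h' * U ^ l) =
      (D ^ i * ι' h) * (U ^ j * D ^ k) * (ι' h' * U ^ l) := by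
    noncomm_ring
  rw [key]
  refine Submodule.span_induction
    (p := fun x _ => (D ^ i * ι' h) * x * (ι' h' * U ^ l) ∈ _)
    ?_ ?_ ?_ ?_ (upow_dpow j k)
  · rintro x ⟨t, g, ht, rfl⟩
    have ht1 : t ≤ j := le_trans ht (min_le_left _ _)
    have ht2 : t ≤ k := le_trans ht (min_le_right _ _)
    apply Submodule.subset_span
    refine ⟨t, ((⇑θ)^[k - t] h * g) * (⇑θ)^[j - t] h', ht, ?_⟩
    rw [mono_mul_left, mono_mul, show i + (k - t) = i + k - t from by omega,
      show j - t + l = j + l - t from by omega]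
  · simp
  · intro x y _ _ hx hy
    rw [mul_add, add_mul]; exact Submodule.add_mem _ hx hy
  · intro r x _ hx
    rw [mul_smul_comm, smul_mul_assoc]; exact Submodule.smul_mem _ _ hx

end GWAProof

theorem mul_monomials_mem_span (i j k l : ℕ) (h h' : H) :
    ((GWA.dd F H θ z0 z1) ^ i * GWA.incl F H θ z0 z1 h * (GWA.uu F H θ z0 z1) ^ j) *
        ((GWA.dd F H θ z0 z1) ^ k * GWA.incl F H θ z0 z1 h' * (GWA.uu F H θ z0 z1) ^ l) ∈
    Submodule.span F
      { x : GWA F H θ z0 z1 | ∃ t : ℕ, ∃ h'' : H, t ≤ min j k ∧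
          x = (GWA.dd F H θ z0 z1) ^ (i + k - t) * GWA.incl F H θ z0 z1 h'' *
            (GWA.uu F H θ z0 z1) ^ (j + l - t) } :=
  GWAProof.main i j k l h h'
end

section
/- PBW property: if (h_i)_{i ∈ I} is a basis of H as an F-vector space, then the family (d^r · ι(h_i) · u^s), indexed by (r, i, s) ∈ ℕ × I × ℕ, is a basis of W = W(H, θ, z0, z1) as an F-vector space. -/
variable (F : Type) [Field F] (H : Type) [CommRing H] [Algebra F H]
variable (θ : H ≃ₐ[F] H) (z0 z1 : H)

/-!
Spanning: the span of the monomials `d ^ r * ι h * u ^ s` contains `1` and is stable under left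
multiplication by `ι a`, `d` and `u`; for `u` this is an induction on `r` using
`u * d = ι z0 + d * ι z1 * u`.

Independence: the same rewriting rules define operators for `ι a`, `d` and `u` on the free module
`(ℕ × ℕ) →₀ H` of formal normal forms. They satisfy the defining relations, so `W` acts there, and
`d ^ r * ι h * u ^ s` sends the normal form of `1` to `single (r, s) h`.
-/

lemma AlgEquiv.pow_succ_apply {R A : Type*} [CommSemiring R] [Semiring A] [Algebra R A]
    (θ : A ≃ₐ[R] A) (a : A) (r : ℕ) : (θ ^ (r + 1)) a = (θ ^ r) (θ a) := by
  rw [pow_succ, AlgEquiv.mul_apply]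

namespace GWA

section NormalForms

variable {F : Type*} [CommSemiring F] {H : Type*} [CommSemiring H] [Algebra F H]
variable (θ : H ≃ₐ[F] H) (z0 z1 : H)

variable (H) in
/-- `single (r, s) h` stands for the normal form `d ^ r * ι h * u ^ s`. -/
abbrev NormalForms : Type _ := (ℕ × ℕ) →₀ H

/-- Left multiplication by `ι a`, using `ι a * d ^ r = d ^ r * ι (θ ^ r a)`. -/
noncomputable def actH : H →ₐ[F] Module.End F (NormalForms H) where
  toFun a := Finsupp.lsum F fun rs => Finsupp.lsingle rs ∘ₗ LinearMap.mulLeft F ((θ ^ rs.1) a)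
  map_one' := Finsupp.lhom_ext fun rs x => by
    simp only [Finsupp.lsum_single, LinearMap.comp_apply, LinearMap.mulLeft_apply,
      Finsupp.lsingle_apply, map_one, one_mul, Module.End.one_apply]
  map_mul' a b := Finsupp.lhom_ext fun rs x => by
    simp only [Finsupp.lsum_single, LinearMap.comp_apply, LinearMap.mulLeft_apply,
      Finsupp.lsingle_apply, map_mul, mul_assoc, Module.End.mul_apply]
  map_zero' := Finsupp.lhom_ext fun rs x => by
    simp only [Finsupp.lsum_single, LinearMap.comp_apply, LinearMap.mulLeft_apply,
      map_zero, zero_mul, LinearMap.zero_apply]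
  map_add' a b := Finsupp.lhom_ext fun rs x => by
    simp only [Finsupp.lsum_single, LinearMap.comp_apply, LinearMap.mulLeft_apply,
      Finsupp.lsingle_apply, map_add, add_mul, LinearMap.add_apply]
  commutes' c := Finsupp.lhom_ext fun rs x => by
    simp only [Finsupp.lsum_single, LinearMap.comp_apply, LinearMap.mulLeft_apply,
      Finsupp.lsingle_apply, AlgEquiv.commutes, Module.algebraMap_end_apply,
      ← Algebra.smul_def, Finsupp.smul_single]

@[simp] lemma actH_single (a x : H) (r s : ℕ) :
    actH θ a (Finsupp.single (r, s) x) = Finsupp.single (r, s) ((θ ^ r) a * x) :=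
  Finsupp.lsum_single ..

lemma actH_comm (a b : H) (m : NormalForms H) :
    actH θ a (actH θ b m) = actH θ b (actH θ a m) := by
  rw [← Module.End.mul_apply, ← map_mul, mul_comm, map_mul, Module.End.mul_apply]

variable (F H) in
noncomputable def actD : Module.End F (NormalForms H) :=
  Finsupp.lmapDomain H F fun rs => (rs.1 + 1, rs.2)

@[simp] lemma actD_single (x : H) (r s : ℕ) :
    actD F H (Finsupp.single (r, s) x) = Finsupp.single (r + 1, s) x := by
  simp [actD]

lemma actD_pow_single (x : H) (r t s : ℕ) :
    (actD F H ^ r) (Finsupp.single (t, s) x) = Finsupp.single (t + r, s) x := by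
  induction r generalizing t with
  | zero => simp
  | succ r ih =>
    rw [pow_succ, Module.End.mul_apply, actD_single, ih, add_right_comm, add_assoc]

lemma actH_mul_actD (a : H) : actH θ a * actD F H = actD F H * actH θ (θ a) :=
  Finsupp.lhom_ext fun ⟨r, s⟩ x => by
    simp only [Module.End.mul_apply, actD_single, actH_single, AlgEquiv.pow_succ_apply]

lemma actH_actD (a : H) (m : NormalForms H) :
    actH θ a (actD F H m) = actD F H (actH θ (θ a) m) :=
  LinearMap.congr_fun (actH_mul_actD θ a) m

/-- Left multiplication by `u` on `d ^ r * ι x * u ^ s`, by recursion on `r` through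
`u * d = ι z0 + d * ι z1 * u`. -/
noncomputable def actUSingle : ℕ → ℕ → H →ₗ[F] NormalForms H
  | 0, s => Finsupp.lsingle (0, s + 1) ∘ₗ θ.toLinearMap
  | r + 1, s =>
    actH θ z0 ∘ₗ Finsupp.lsingle (r, s) + actD F H ∘ₗ actH θ z1 ∘ₗ actUSingle r s

noncomputable def actU : Module.End F (NormalForms H) :=
  Finsupp.lsum F fun rs => actUSingle θ z0 z1 rs.1 rs.2

lemma actU_single_zero (x : H) (s : ℕ) :
    actU θ z0 z1 (Finsupp.single (0, s) x) = Finsupp.single (0, s + 1) (θ x) := by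
  simp [actU, actUSingle]

lemma actU_single_succ (x : H) (r s : ℕ) :
    actU θ z0 z1 (Finsupp.single (r + 1, s) x) =
      actH θ z0 (Finsupp.single (r, s) x) +
        actD F H (actH θ z1 (actU θ z0 z1 (Finsupp.single (r, s) x))) := by
  simp [actU, actUSingle]

lemma actU_pow_single_one (t s : ℕ) :
    (actU θ z0 z1 ^ s) (Finsupp.single (0, t) 1) = Finsupp.single (0, t + s) 1 := by
  induction s generalizing t with
  | zero => simp
  | succ s ih =>
    rw [pow_succ, Module.End.mul_apply, actU_single_zero, map_one, ih, add_right_comm, add_assoc]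

lemma actU_actH_single (a x : H) (r s : ℕ) :
    actU θ z0 z1 (actH θ a (Finsupp.single (r, s) x)) =
      actH θ (θ a) (actU θ z0 z1 (Finsupp.single (r, s) x)) := by
  induction r generalizing a with
  | zero =>
    rw [actH_single, actU_single_zero, actU_single_zero, actH_single]
    simp only [pow_zero, AlgEquiv.one_apply, map_mul]
  | succ r ih =>
    have hshift : Finsupp.single (r, s) ((θ ^ (r + 1)) a * x) =
        actH θ (θ a) (Finsupp.single (r, s) x) := by
      rw [actH_single, AlgEquiv.pow_succ_apply]
    rw [actH_single, actU_single_succ, actU_single_succ, hshift, ih, map_add, actH_comm θ z0,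
      actH_actD, actH_comm θ z1]

lemma actU_mul_actH (a : H) : actU θ z0 z1 * actH θ a = actH θ (θ a) * actU θ z0 z1 :=
  Finsupp.lhom_ext fun ⟨r, s⟩ x => actU_actH_single θ z0 z1 a x r s

lemma actU_mul_actD :
    actU θ z0 z1 * actD F H = actH θ z0 + actD F H * actH θ z1 * actU θ z0 z1 :=
  Finsupp.lhom_ext fun ⟨r, s⟩ x => by
    simp only [Module.End.mul_apply, actD_single, actU_single_succ, LinearMap.add_apply]

end NormalForms

section Relations

variable {F H θ z0 z1}

lemma incl_one_s8 : incl F H θ z0 z1 1 = 1 := by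
  rw [incl, ← map_one (RingQuot.mkAlgHom F (GWARel F H θ z0 z1))]
  exact RingQuot.mkAlgHom_rel F GWARel.base_one

lemma incl_mul_s8 (a b : H) :
    incl F H θ z0 z1 (a * b) = incl F H θ z0 z1 a * incl F H θ z0 z1 b := by
  rw [incl, incl, incl, ← map_mul]
  exact RingQuot.mkAlgHom_rel F (GWARel.base_mul a b)

variable (F H θ z0 z1) in
noncomputable def inclₗ : H →ₗ[F] GWA F H θ z0 z1 where
  toFun := incl F H θ z0 z1
  map_add' a b := by
    rw [incl, incl, incl, ← map_add]
    exact RingQuot.mkAlgHom_rel F (GWARel.base_add a b)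
  map_smul' c a := by
    rw [incl, incl, RingHom.id_apply, ← map_smul]
    exact RingQuot.mkAlgHom_rel F (GWARel.base_smul c a)

lemma uu_mul_incl (a : H) :
    uu F H θ z0 z1 * incl F H θ z0 z1 a = incl F H θ z0 z1 (θ a) * uu F H θ z0 z1 := by
  rw [uu, incl, incl, ← map_mul, ← map_mul]
  exact RingQuot.mkAlgHom_rel F (GWARel.u_comm a)

lemma incl_mul_dd (a : H) :
    incl F H θ z0 z1 a * dd F H θ z0 z1 = dd F H θ z0 z1 * incl F H θ z0 z1 (θ a) := by
  rw [dd, incl, incl, ← map_mul, ← map_mul]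
  exact RingQuot.mkAlgHom_rel F (GWARel.d_comm a)

lemma uu_mul_dd : uu F H θ z0 z1 * dd F H θ z0 z1 =
    incl F H θ z0 z1 z0 + dd F H θ z0 z1 * incl F H θ z0 z1 z1 * uu F H θ z0 z1 := by
  rw [uu, dd, incl, incl, ← map_mul, ← map_mul, ← map_mul, ← map_add]
  exact RingQuot.mkAlgHom_rel F GWARel.ud

lemma incl_mul_dd_pow (a : H) (r : ℕ) :
    incl F H θ z0 z1 a * dd F H θ z0 z1 ^ r =
      dd F H θ z0 z1 ^ r * incl F H θ z0 z1 ((θ ^ r) a) := by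
  induction r generalizing a with
  | zero => simp
  | succ r ih =>
    rw [pow_succ', ← mul_assoc, incl_mul_dd, mul_assoc, ih, ← mul_assoc, AlgEquiv.pow_succ_apply]

variable (F H θ z0 z1) in
noncomputable def monomial (r : ℕ) (h : H) (s : ℕ) : GWA F H θ z0 z1 :=
  dd F H θ z0 z1 ^ r * incl F H θ z0 z1 h * uu F H θ z0 z1 ^ s

lemma incl_mul_monomial (a h : H) (r s : ℕ) :
    incl F H θ z0 z1 a * monomial F H θ z0 z1 r h s =
      monomial F H θ z0 z1 r ((θ ^ r) a * h) s := by
  rw [monomial, monomial, ← mul_assoc, ← mul_assoc, incl_mul_dd_pow, mul_assoc (_ ^ r),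
    ← incl_mul_s8]

lemma dd_mul_monomial (h : H) (r s : ℕ) :
    dd F H θ z0 z1 * monomial F H θ z0 z1 r h s = monomial F H θ z0 z1 (r + 1) h s := by
  rw [monomial, monomial, ← mul_assoc, ← mul_assoc, ← pow_succ']

lemma uu_mul_monomial_zero (h : H) (s : ℕ) :
    uu F H θ z0 z1 * monomial F H θ z0 z1 0 h s = monomial F H θ z0 z1 0 (θ h) (s + 1) := by
  rw [monomial, monomial, pow_zero, one_mul, one_mul, ← mul_assoc, uu_mul_incl, mul_assoc,
    ← pow_succ']

lemma uu_mul_monomial_succ (h : H) (r s : ℕ) :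
    uu F H θ z0 z1 * monomial F H θ z0 z1 (r + 1) h s =
      incl F H θ z0 z1 z0 * monomial F H θ z0 z1 r h s +
        dd F H θ z0 z1 *
          (incl F H θ z0 z1 z1 * (uu F H θ z0 z1 * monomial F H θ z0 z1 r h s)) := by
  rw [← dd_mul_monomial, ← mul_assoc, uu_mul_dd, add_mul, mul_assoc, mul_assoc]

end Relations

section Representation

variable {F H}

noncomputable def actGen : GWAGen H → Module.End F (NormalForms H)
  | .base h => actH θ h
  | .d => actD F H
  | .u => actU θ z0 z1

lemma lift_actGen_rel ⦃x y : FreeAlgebra F (GWAGen H)⦄ (hxy : GWARel F H θ z0 z1 x y) :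
    FreeAlgebra.lift F (actGen θ z0 z1) x = FreeAlgebra.lift F (actGen θ z0 z1) y := by
  cases hxy <;>
    simp only [map_one, map_add, map_mul, map_smul, FreeAlgebra.lift_ι_apply, actGen,
      actU_mul_actH, actH_mul_actD, actU_mul_actD]

noncomputable def rep : GWA F H θ z0 z1 →ₐ[F] Module.End F (NormalForms H) :=
  RingQuot.liftAlgHom F ⟨FreeAlgebra.lift F (actGen θ z0 z1), lift_actGen_rel θ z0 z1⟩

lemma rep_incl (h : H) : rep θ z0 z1 (incl F H θ z0 z1 h) = actH θ h := by
  rw [rep, incl, RingQuot.liftAlgHom_mkAlgHom_apply, FreeAlgebra.lift_ι_apply, actGen]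

lemma rep_dd : rep θ z0 z1 (dd F H θ z0 z1) = actD F H := by
  rw [rep, dd, RingQuot.liftAlgHom_mkAlgHom_apply, FreeAlgebra.lift_ι_apply, actGen]

lemma rep_uu : rep θ z0 z1 (uu F H θ z0 z1) = actU θ z0 z1 := by
  rw [rep, uu, RingQuot.liftAlgHom_mkAlgHom_apply, FreeAlgebra.lift_ι_apply, actGen]

noncomputable def normalForm : GWA F H θ z0 z1 →ₗ[F] NormalForms H :=
  LinearMap.applyₗ (Finsupp.single (0, 0) 1) ∘ₗ (rep θ z0 z1).toLinearMap

lemma normalForm_monomial (r : ℕ) (h : H) (s : ℕ) :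
    normalForm θ z0 z1 (monomial F H θ z0 z1 r h s) = Finsupp.single (r, s) h := by
  rw [normalForm, LinearMap.comp_apply, AlgHom.toLinearMap_apply, LinearMap.applyₗ_apply_apply,
    monomial, map_mul, map_mul, map_pow, map_pow, rep_incl, rep_dd, rep_uu, Module.End.mul_apply,
    Module.End.mul_apply, actU_pow_single_one, actH_single, actD_pow_single, pow_zero,
    AlgEquiv.one_apply, mul_one, zero_add, zero_add]

end Representation

section PBW

variable {F H θ z0 z1}

lemma linearIndependent_monomial {I : Type*} (b : Module.Basis I F H) :
    LinearIndependent F fun p : ℕ × I × ℕ => monomial F H θ z0 z1 p.1 (b p.2.1) p.2.2 := by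
  refine LinearIndependent.of_comp (normalForm θ z0 z1) ?_
  have hsingle := Finsupp.linearIndependent_single (R := F) (fun _ : ℕ × ℕ => b)
    fun _ => b.linearIndependent
  have hinj :
      Function.Injective fun p : ℕ × I × ℕ => (⟨(p.1, p.2.2), p.2.1⟩ : Σ _ : ℕ × ℕ, I) := by
    rintro ⟨r, i, s⟩ ⟨r', i', s'⟩ h
    simp_all
  convert hsingle.comp _ hinj using 1
  exact funext fun p => normalForm_monomial θ z0 z1 _ _ _

lemma eq_top_of_mul_mem (P : Submodule F (GWA F H θ z0 z1)) (one_mem : 1 ∈ P)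
    (incl_mul_mem : ∀ a, ∀ w ∈ P, incl F H θ z0 z1 a * w ∈ P)
    (dd_mul_mem : ∀ w ∈ P, dd F H θ z0 z1 * w ∈ P)
    (uu_mul_mem : ∀ w ∈ P, uu F H θ z0 z1 * w ∈ P) : P = ⊤ := by
  suffices h : ∀ x : FreeAlgebra F (GWAGen H), ∀ w ∈ P, RingQuot.mkAlgHom F _ x * w ∈ P by
    refine eq_top_iff.mpr fun w _ => ?_
    obtain ⟨x, rfl⟩ := RingQuot.mkAlgHom_surjective F (GWARel F H θ z0 z1) w
    simpa using h x 1 one_mem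
  intro x
  induction x using FreeAlgebra.induction with
  | grade0 c =>
    intro w hw
    rw [AlgHom.commutes, ← Algebra.smul_def]
    exact P.smul_mem c hw
  | grade1 g =>
    cases g with
    | base a => exact incl_mul_mem a
    | d => exact dd_mul_mem
    | u => exact uu_mul_mem
  | mul x y hx hy =>
    intro w hw
    rw [map_mul, mul_assoc]
    exact hx _ (hy w hw)
  | add x y hx hy =>
    intro w hw
    rw [map_add, add_mul]
    exact P.add_mem (hx w hw) (hy w hw)

lemma span_monomial_eq_top {I : Type*} (b : Module.Basis I F H) :
    Submodule.span F (Set.range fun p : ℕ × I × ℕ => monomial F H θ z0 z1 p.1 (b p.2.1) p.2.2) =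
      ⊤ := by
  set S :=
    Submodule.span F (Set.range fun p : ℕ × I × ℕ => monomial F H θ z0 z1 p.1 (b p.2.1) p.2.2)
  have monomial_mem (r : ℕ) (h : H) (s : ℕ) : monomial F H θ z0 z1 r h s ∈ S := by
    let φ : H →ₗ[F] GWA F H θ z0 z1 := LinearMap.mulRight F (uu F H θ z0 z1 ^ s) ∘ₗ
      LinearMap.mulLeft F (dd F H θ z0 z1 ^ r) ∘ₗ inclₗ F H θ z0 z1
    have hspan : Submodule.span F (Set.range b) ≤ S.comap φ :=
      Submodule.span_le.mpr <| Set.range_subset_iff.mpr fun i =>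
        Submodule.subset_span ⟨(r, i, s), rfl⟩
    exact hspan (b.mem_span h)
  have mul_mem (x : GWA F H θ z0 z1) (hx : ∀ r h s, x * monomial F H θ z0 z1 r h s ∈ S) :
      ∀ w ∈ S, x * w ∈ S := fun w hw =>
    (Submodule.span_le (p := S.comap (LinearMap.mulLeft F x)) |>.mpr
      (Set.range_subset_iff.mpr fun p => hx _ _ _)) hw
  have incl_mul_mem (a : H) : ∀ w ∈ S, incl F H θ z0 z1 a * w ∈ S :=
    mul_mem _ fun r h s => by rw [incl_mul_monomial]; exact monomial_mem _ _ _
  have dd_mul_mem : ∀ w ∈ S, dd F H θ z0 z1 * w ∈ S :=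
    mul_mem _ fun r h s => by rw [dd_mul_monomial]; exact monomial_mem _ _ _
  have uu_mul_mem : ∀ w ∈ S, uu F H θ z0 z1 * w ∈ S := by
    refine mul_mem _ fun r h s => ?_
    induction r with
    | zero => rw [uu_mul_monomial_zero]; exact monomial_mem _ _ _
    | succ r ih =>
      rw [uu_mul_monomial_succ]
      exact S.add_mem (incl_mul_mem _ _ (monomial_mem _ _ _))
        (dd_mul_mem _ (incl_mul_mem _ _ ih))
  refine eq_top_of_mul_mem S ?_ incl_mul_mem dd_mul_mem uu_mul_mem
  simpa [monomial, incl_one_s8] using monomial_mem 0 1 0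

end PBW

end GWA

theorem pbw_basis (I : Type) (b : Module.Basis I F H) :
    LinearIndependent F (fun p : ℕ × I × ℕ =>
        (GWA.dd F H θ z0 z1) ^ p.1 * GWA.incl F H θ z0 z1 (b p.2.1) *
          (GWA.uu F H θ z0 z1) ^ p.2.2) ∧
    Submodule.span F
        (Set.range (fun p : ℕ × I × ℕ =>
          (GWA.dd F H θ z0 z1) ^ p.1 * GWA.incl F H θ z0 z1 (b p.2.1) *
            (GWA.uu F H θ z0 z1) ^ p.2.2)) = ⊤ :=
  ⟨GWA.linearIndependent_monomial b, GWA.span_monomial_eq_top b⟩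
end

section
/- In W = W(H, θ, z0, z1), the elements d·u and u·d are simultaneously algebraic over H: there exists a nonzero polynomial f = Σ_k a_k X^k with coefficients a_k ∈ H such that Σ_k ι(a_k)·(d·u)^k = 0 in W, if and only if there exists a nonzero polynomial g = Σ_k b_k X^k with coefficients b_k ∈ H such that Σ_k ι(b_k)·(u·d)^k = 0 in W. -/
variable (F : Type) [Field F] (H : Type) [CommRing H] [Algebra F H]
variable (θ : H ≃ₐ[F] H) (z0 z1 : H)

section Aux

open Polynomial

/-- `ι : H → W` as a ring homomorphism. -/
noncomputable def GWA.inclHom : H →+* GWA F H θ z0 z1 where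
  toFun h := GWA.incl F H θ z0 z1 h
  map_one' := by
    simpa [GWA.incl] using RingQuot.mkAlgHom_rel F (GWARel.base_one (F := F) (H := H)
      (θ := θ) (z0 := z0) (z1 := z1))
  map_mul' a b := by
    simpa [GWA.incl] using RingQuot.mkAlgHom_rel F (GWARel.base_mul (F := F) (H := H)
      (θ := θ) (z0 := z0) (z1 := z1) a b)
  map_zero' := by
    have h := RingQuot.mkAlgHom_rel F (GWARel.base_smul (F := F) (H := H)
      (θ := θ) (z0 := z0) (z1 := z1) 0 0)
    simpa [GWA.incl] using h
  map_add' a b := by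
    simpa [GWA.incl] using RingQuot.mkAlgHom_rel F (GWARel.base_add (F := F) (H := H)
      (θ := θ) (z0 := z0) (z1 := z1) a b)

namespace GWAaux

local notation "ι" => GWA.inclHom F H θ z0 z1
local notation "dd" => GWA.dd F H θ z0 z1
local notation "uu" => GWA.uu F H θ z0 z1

lemma incl_d (a : H) : ι a * dd = dd * ι (θ a) := by
  have h := RingQuot.mkAlgHom_rel F (GWARel.d_comm (F := F) (H := H)
    (θ := θ) (z0 := z0) (z1 := z1) a)
  simpa [GWA.inclHom, GWA.incl, GWA.dd, map_mul] using h

lemma u_incl (a : H) : uu * ι a = ι (θ a) * uu := by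
  have h := RingQuot.mkAlgHom_rel F (GWARel.u_comm (F := F) (H := H)
    (θ := θ) (z0 := z0) (z1 := z1) a)
  simpa [GWA.inclHom, GWA.incl, GWA.uu, map_mul] using h

lemma d_incl (a : H) : dd * ι a = ι (θ.symm a) * dd := by
  have h := incl_d F H θ z0 z1 (θ.symm a)
  rw [θ.apply_symm_apply] at h
  exact h.symm

lemma incl_u (a : H) : ι a * uu = uu * ι (θ.symm a) := by
  have h := u_incl F H θ z0 z1 (θ.symm a)
  rw [θ.apply_symm_apply] at h
  exact h.symm

lemma t_incl (a : H) : (dd * uu) * ι a = ι a * (dd * uu) := by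
  rw [mul_assoc, u_incl, ← mul_assoc, d_incl, θ.symm_apply_apply, mul_assoc]

lemma s_incl (a : H) : (uu * dd) * ι a = ι a * (uu * dd) := by
  rw [mul_assoc, d_incl, ← mul_assoc, u_incl, θ.apply_symm_apply, mul_assoc]

lemma t_pow_incl (a : H) (k : ℕ) : (dd * uu) ^ k * ι a = ι a * (dd * uu) ^ k :=
  ((Commute.symm (t_incl F H θ z0 z1 a)).pow_right k).symm

lemma s_pow_incl (a : H) (k : ℕ) : (uu * dd) ^ k * ι a = ι a * (uu * dd) ^ k :=
  ((Commute.symm (s_incl F H θ z0 z1 a)).pow_right k).symm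

/-- The key identity: `p(t)·d = d·(θp)(s)` where `t = du`, `s = ud`. -/
lemma key (p : Polynomial H) :
    Polynomial.eval₂ ι (dd * uu) p * dd =
      dd * Polynomial.eval₂ ι (uu * dd) (p.map (θ : H →+* H)) := by
  induction p using Polynomial.induction_on' with
  | add p q hp hq =>
    rw [Polynomial.map_add, Polynomial.eval₂_add, Polynomial.eval₂_add, add_mul, mul_add, hp, hq]
  | monomial n a =>
    rw [Polynomial.map_monomial, Polynomial.eval₂_monomial, Polynomial.eval₂_monomial]
    have hsc : dd * (uu * dd) ^ n = (dd * uu) ^ n * dd := by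
      have : SemiconjBy dd (uu * dd) (dd * uu) := by
        unfold SemiconjBy; rw [mul_assoc]
      exact (this.pow_right n)
    have hco : ι ((θ : H →+* H) a) = ι (θ a) := rfl
    rw [hco]
    calc ι a * (dd * uu) ^ n * dd = ι a * ((dd * uu) ^ n * dd) := by rw [mul_assoc]
      _ = ι a * (dd * (uu * dd) ^ n) := by rw [hsc]
      _ = (ι a * dd) * (uu * dd) ^ n := by rw [mul_assoc]
      _ = dd * ι (θ a) * (uu * dd) ^ n := by rw [incl_d]
      _ = dd * (ι (θ a) * (uu * dd) ^ n) := by rw [mul_assoc]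

lemma commute_eval_t (p : Polynomial H) :
    Commute (Polynomial.eval₂ ι (dd * uu) p) (dd * uu) := by
  induction p using Polynomial.induction_on' with
  | add p q hp hq => rw [Polynomial.eval₂_add]; exact hp.add_left hq
  | monomial n a =>
    rw [Polynomial.eval₂_monomial]
    exact (Commute.symm (t_incl F H θ z0 z1 a)).mul_left ((Commute.refl _).pow_left n)

lemma commute_eval_s (p : Polynomial H) :
    Commute (Polynomial.eval₂ ι (uu * dd) p) (uu * dd) := by
  induction p using Polynomial.induction_on' with
  | add p q hp hq => rw [Polynomial.eval₂_add]; exact hp.add_left hq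
  | monomial n a =>
    rw [Polynomial.eval₂_monomial]
    exact (Commute.symm (s_incl F H θ z0 z1 a)).mul_left ((Commute.refl _).pow_left n)

lemma mul_X_ne_zero {p : Polynomial H} (hp : p ≠ 0) : p * Polynomial.X ≠ 0 := by
  intro h
  apply hp
  ext n
  have := congrArg (fun q => Polynomial.coeff q (n + 1)) h
  simpa [Polynomial.coeff_mul_X] using this

end GWAaux

end Aux

theorem du_algebraic_iff_ud_algebraic :
    (∃ f : Polynomial H, f ≠ 0 ∧
        (f.sum fun k a =>
          GWA.incl F H θ z0 z1 a * (GWA.dd F H θ z0 z1 * GWA.uu F H θ z0 z1) ^ k) = 0) ↔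
    (∃ g : Polynomial H, g ≠ 0 ∧
        (g.sum fun k b =>
          GWA.incl F H θ z0 z1 b * (GWA.uu F H θ z0 z1 * GWA.dd F H θ z0 z1) ^ k) = 0) := by
  set ι := GWA.inclHom F H θ z0 z1 with hι
  set d := GWA.dd F H θ z0 z1
  set u := GWA.uu F H θ z0 z1
  have hsum : ∀ (x : GWA F H θ z0 z1) (p : Polynomial H),
      (p.sum fun k a => GWA.incl F H θ z0 z1 a * x ^ k) = Polynomial.eval₂ ι x p := by
    intro x p
    rw [Polynomial.eval₂_eq_sum]
    rfl
  have hcommt : ∀ (q : Polynomial H) (k : ℕ), Commute (ι (q.coeff k)) (d * u) :=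
    fun q k => (GWAaux.t_incl F H θ z0 z1 (q.coeff k)).symm
  have hcomms : ∀ (q : Polynomial H) (k : ℕ), Commute (ι (q.coeff k)) (u * d) :=
    fun q k => (GWAaux.s_incl F H θ z0 z1 (q.coeff k)).symm
  constructor
  · rintro ⟨f, hf0, hf⟩
    rw [hsum] at hf
    refine ⟨f.map (θ : H →+* H) * Polynomial.X, GWAaux.mul_X_ne_zero (H := H) ?_, ?_⟩
    · exact (Polynomial.map_ne_zero_iff (f := (θ : H →+* H)) (fun a b h => θ.injective h)).mpr hf0
    · rw [hsum, Polynomial.eval₂_mul_noncomm ι (u * d) (hcomms _), Polynomial.eval₂_X]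
      have h1 := (GWAaux.commute_eval_s F H θ z0 z1 (f.map (θ : H →+* H))).symm
      rw [← h1]
      have h2 := GWAaux.key F H θ z0 z1 f
      calc (u * d) * Polynomial.eval₂ ι (u * d) (f.map (θ : H →+* H))
          = u * (d * Polynomial.eval₂ ι (u * d) (f.map (θ : H →+* H))) := by rw [mul_assoc]
        _ = u * (Polynomial.eval₂ ι (d * u) f * d) := by rw [← h2]
        _ = u * (0 * d) := by rw [hf]
        _ = 0 := by rw [zero_mul, mul_zero]
  · rintro ⟨g, hg0, hg⟩
    rw [hsum] at hg
    set p := g.map (θ.symm : H →+* H) with hp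
    have hpg : p.map (θ : H →+* H) = g := by
      rw [hp, Polynomial.map_map]
      have : ((θ : H →+* H).comp (θ.symm : H →+* H)) = RingHom.id H := by
        ext a; simp
      rw [this, Polynomial.map_id]
    refine ⟨p * Polynomial.X, GWAaux.mul_X_ne_zero (H := H) ?_, ?_⟩
    · exact (Polynomial.map_ne_zero_iff (f := (θ.symm : H →+* H)) (fun a b h => θ.symm.injective h)).mpr hg0
    · rw [hsum, Polynomial.eval₂_mul_noncomm ι (d * u) (hcommt _), Polynomial.eval₂_X]
      have h2 := GWAaux.key F H θ z0 z1 p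
      rw [hpg, hg, mul_zero] at h2
      calc Polynomial.eval₂ ι (d * u) p * (d * u)
          = (Polynomial.eval₂ ι (d * u) p * d) * u := by rw [mul_assoc]
        _ = 0 * u := by rw [h2]
        _ = 0 := zero_mul _
end

section
/- Let R be a commutative ring, t ∈ R, and n ≥ 1 an integer. Let M' be the n×n matrix over R with entries (1-based indexing): M'_{1,1} = 1; M'_{i,i} = 1 + t^2 for 2 ≤ i ≤ n; M'_{i,j} = −t when |i − j| = 1; and M'_{i,j} = 0 otherwise. Let B be the n×n matrix with B_{i,j} = Σ_{u = max(i,j)}^{n} t^{2u − i − j}. Then B · M' = I = M' · B; in particular M' is invertible with inverse B. -/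
/-!
STATEMENT: Let `R` be a commutative ring, `t ∈ R`, and `n ≥ 1`.  Let `M'` be the
`n×n` matrix over `R` with entries (1-based indexing): `M'_{1,1} = 1`;
`M'_{i,i} = 1 + t²` for `2 ≤ i ≤ n`; `M'_{i,j} = −t` when `|i − j| = 1`; and
`M'_{i,j} = 0` otherwise.  Let `B` be the `n×n` matrix with
`B_{i,j} = Σ_{u = max(i,j)}^{n} t^{2u − i − j}`.  Then `B·M' = I = M'·B`; in
particular `M'` is invertible with inverse `B`.
(Here the index `i : Fin n` corresponds to the 1-based index `i + 1`.)
-/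

open Finset Matrix

lemma sum_delta' {R : Type} [AddCommMonoid R] {n : ℕ} (p : Fin n → Prop) [DecidablePred p]
    {m : ℕ} (hm : m < n) (hp : ∀ k : Fin n, p k ↔ (k : ℕ) = m) (f : Fin n → R) :
    (∑ k : Fin n, if p k then f k else 0) = f ⟨m, hm⟩ := by
  rw [Finset.sum_eq_single (⟨m, hm⟩ : Fin n)]
  · rw [if_pos ((hp _).mpr rfl)]
  · intro k _ hk
    rw [if_neg]
    intro h
    exact hk (Fin.ext ((hp k).mp h))
  · intro h; exact absurd (mem_univ _) h

lemma sum_delta_zero' {R : Type} [AddCommMonoid R] {n : ℕ} (p : Fin n → Prop) [DecidablePred p]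
    (hp : ∀ k : Fin n, ¬ p k) (f : Fin n → R) :
    (∑ k : Fin n, if p k then f k else 0) = 0 :=
  Finset.sum_eq_zero fun k _ => if_neg (hp k)

-- shift-delta sum
lemma sum_shift' {R : Type} [AddCommMonoid R] {n : ℕ} (m : ℕ) (hmn : m ≤ n) (f : Fin n → R) :
    (∑ k : Fin n, if (k : ℕ) + 1 = m then f k else 0) =
      if h : 1 ≤ m then f ⟨m - 1, by omega⟩ else 0 := by
  split
  · exact sum_delta' _ (by omega) (fun k => by omega) f
  · exact sum_delta_zero' _ (fun k => by omega) f

lemma sum_eqdelta' {R : Type} [AddCommMonoid R] {n : ℕ} (i : Fin n) (f : Fin n → R) :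
    (∑ k : Fin n, if i = k then f k else 0) = f i := by
  have := sum_delta' (fun k : Fin n => i = k) i.isLt (fun k => ⟨fun h => by simp [h], fun h => Fin.ext h.symm⟩) f
  simpa using this

set_option maxHeartbeats 1000000 in
theorem hilbert_matrix_inverse (R : Type) [CommRing R] (t : R) (n : ℕ) (hn : 1 ≤ n)
    (M' B : Matrix (Fin n) (Fin n) R)
    (hM' : ∀ i j : Fin n,
      M' i j =
        if i = j then (if (i : ℕ) = 0 then 1 else 1 + t ^ 2)
        else if (i : ℕ) + 1 = (j : ℕ) ∨ (j : ℕ) + 1 = (i : ℕ) then -t else 0)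
    (hB : ∀ i j : Fin n,
      B i j = ∑ u ∈ Finset.Icc (max ((i : ℕ) + 1) ((j : ℕ) + 1)) n,
        t ^ (2 * u - ((i : ℕ) + 1) - ((j : ℕ) + 1))) :
    B * M' = 1 ∧ M' * B = 1 := by
  classical
  set L : Matrix (Fin n) (Fin n) R := Matrix.of fun i k =>
    (if i = k then (1:R) else 0) + (if (k:ℕ)+1 = (i:ℕ) then -t else 0) with hLdef
  set K : Matrix (Fin n) (Fin n) R := Matrix.of fun k j =>
    if (j:ℕ) ≤ (k:ℕ) then t ^ ((k:ℕ) - (j:ℕ)) else 0 with hKdef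
  have hLK : L * K = 1 := by
    ext i j
    rw [Matrix.mul_apply]
    simp only [hLdef, hKdef, Matrix.of_apply, add_mul, ite_mul, one_mul, zero_mul, neg_mul]
    rw [Finset.sum_add_distrib, sum_eqdelta' i (fun k => if (j:ℕ) ≤ (k:ℕ) then t ^ ((k:ℕ) - (j:ℕ)) else 0),
      sum_shift' (i:ℕ) (by omega) (fun k => -(t * if (j:ℕ) ≤ (k:ℕ) then t ^ ((k:ℕ) - (j:ℕ)) else 0))]
    rw [Matrix.one_apply]
    split_ifs with h1 h2 h3 h4 h5 h6 h7
    all_goals simp only [Fin.ext_iff, Fin.val_mk] at *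
    all_goals try omega
    all_goals try (exfalso; omega)
    all_goals try (rw [show (i:ℕ)-(j:ℕ) = 0 from by omega]; norm_num)
    all_goals try (rw [show (i:ℕ)-(j:ℕ) = ((i:ℕ)-1-(j:ℕ))+1 from by omega, pow_succ]; ring)
    all_goals ring
  have hKL : K * L = 1 := mul_eq_one_comm.mp hLK
  have hM : M' = L * Lᵀ := by
    ext i j
    rw [Matrix.mul_apply, hM' i j]
    have hsum : ∀ k : Fin n, L i k * Lᵀ k j =
        (if i = k then ((if j = k then (1:R) else 0) + (if (k:ℕ)+1 = (j:ℕ) then -t else 0)) else 0)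
        + (if (k:ℕ)+1 = (i:ℕ) then
            (-t) * ((if j = k then (1:R) else 0) + (if (k:ℕ)+1 = (j:ℕ) then -t else 0)) else 0) := by
      intro k
      simp only [hLdef, Matrix.transpose_apply, Matrix.of_apply]
      split_ifs <;> ring
    rw [Finset.sum_congr rfl (fun k _ => hsum k), Finset.sum_add_distrib,
      sum_eqdelta' i (fun k => (if j = k then (1:R) else 0) + (if (k:ℕ)+1 = (j:ℕ) then -t else 0)),
      sum_shift' (i:ℕ) (by omega)
        (fun k => (-t) * ((if j = k then (1:R) else 0) + (if (k:ℕ)+1 = (j:ℕ) then -t else 0)))]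
    split_ifs with h1 h2 h3 h4 h5 h6 h7 h8 h9 h10 h11 h12 h13 h14 h15
    all_goals simp only [Fin.ext_iff, Fin.val_mk] at *
    all_goals try omega
    all_goals try (exfalso; omega)
    all_goals ring
  have hBK : B = Kᵀ * K := by
    ext i j
    rw [Matrix.mul_apply, hB i j]
    have hsum : ∀ k : Fin n, Kᵀ i k * K k j =
        if max (i:ℕ) (j:ℕ) ≤ (k:ℕ) then t ^ (2*(k:ℕ) - (i:ℕ) - (j:ℕ)) else 0 := by
      intro k
      simp only [hKdef, Matrix.transpose_apply, Matrix.of_apply]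
      split_ifs with h1 h2 h3 h4
      · rw [← pow_add]; congr 1; omega
      all_goals first | (exfalso; omega) | ring
    rw [Finset.sum_congr rfl (fun k _ => hsum k),
      Fin.sum_univ_eq_sum_range (fun m => if max (i:ℕ) (j:ℕ) ≤ m then t ^ (2*m - (i:ℕ) - (j:ℕ)) else 0) n,
      ← Finset.sum_filter,
      show (Finset.range n).filter (fun m => max (i:ℕ) (j:ℕ) ≤ m) = Finset.Ico (max (i:ℕ) (j:ℕ)) n from by
        ext m; simp [Finset.mem_filter, Finset.mem_range, Finset.mem_Ico, and_comm],
      show Finset.Icc (max ((i:ℕ)+1) ((j:ℕ)+1)) n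
          = (Finset.Ico (max (i:ℕ) (j:ℕ)) n).map (addRightEmbedding 1) from by
        rw [Finset.map_add_right_Ico, Finset.Ico_add_one_right_eq_Icc]; congr 1; omega,
      Finset.sum_map]
    refine Finset.sum_congr rfl fun k hk => ?_
    rw [Finset.mem_Ico] at hk
    simp only [addRightEmbedding_apply]
    congr 1
    omega
  have h1 : M' * B = 1 := by
    have htr : Lᵀ * Kᵀ = 1 := by rw [← Matrix.transpose_mul, hKL, Matrix.transpose_one]
    rw [hM, hBK, Matrix.mul_assoc L, ← Matrix.mul_assoc Lᵀ, htr, Matrix.one_mul, hLK]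
  exact ⟨mul_eq_one_comm.mp h1, h1⟩
end

section
/- Fix an integer k ≥ 1. For a subset ψ ⊆ {1, …, k}, define S(ψ) ⊆ ℕ × ℕ by: (r, c) ∈ S(ψ) if and only if r ≥ 1, c ≥ 1, r + c ≤ k + 1, and ψ contains at least c elements that are ≥ k + 2 − r − c. Let δ_k := { (r, c) : r ≥ 1, c ≥ 1, r + c ≤ k + 1 }. Then for every subset ψ ⊆ {1, …, k}: δ_k \ S(ψ) = { (r, c) : (c, r) ∈ S({1, …, k} \ ψ) }; that is, the complement of S(ψ) in the staircase δ_k is the transpose of the diagram of the complementary subset. -/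
/-!
STATEMENT: Fix an integer `k ≥ 1`.  For a subset `ψ ⊆ {1, …, k}`, define
`S(ψ) ⊆ ℕ × ℕ` by: `(r, c) ∈ S(ψ)` iff `r ≥ 1`, `c ≥ 1`, `r + c ≤ k + 1`, and `ψ`
contains at least `c` elements that are `≥ k + 2 − r − c`.  Let
`δ_k := { (r, c) : r ≥ 1, c ≥ 1, r + c ≤ k + 1 }`.  Then for every `ψ ⊆ {1, …, k}`:
`δ_k \ S(ψ) = { (r, c) : (c, r) ∈ S({1, …, k} \ ψ) }`; that is, the complement of
`S(ψ)` in the staircase `δ_k` is the transpose of the diagram of the complementary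
subset.
-/

/-- The sub-triangular Young tableau (as a set of cells) associated to a subset
`ψ ⊆ {1, …, k}`: cell `(r, c)` belongs to it iff `r, c ≥ 1`, `r + c ≤ k + 1`, and
`ψ` has at least `c` elements `≥ k + 2 − r − c`. -/
def stytCells (k : ℕ) (ψ : Finset ℕ) : Set (ℕ × ℕ) :=
  { p | 1 ≤ p.1 ∧ 1 ≤ p.2 ∧ p.1 + p.2 ≤ k + 1 ∧
      p.2 ≤ (ψ.filter fun m => k + 2 - p.1 - p.2 ≤ m).card }

theorem styt_complement_transpose (k : ℕ) (hk : 1 ≤ k) (ψ : Finset ℕ)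
    (hψ : ψ ⊆ Finset.Icc 1 k) :
    { p : ℕ × ℕ | 1 ≤ p.1 ∧ 1 ≤ p.2 ∧ p.1 + p.2 ≤ k + 1 } \ stytCells k ψ =
      { p : ℕ × ℕ | (p.2, p.1) ∈ stytCells k (Finset.Icc 1 k \ ψ) } := by
  ext ⟨r, c⟩
  simp only [Set.mem_diff, Set.mem_setOf_eq, stytCells]
  have key : ∀ hr : 1 ≤ r, ∀ hc : 1 ≤ c, r + c ≤ k + 1 →
      (ψ.filter fun m => k + 2 - r - c ≤ m).card
        + ((Finset.Icc 1 k \ ψ).filter fun m => k + 2 - r - c ≤ m).card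
        = r + c - 1 := by
    intro hr hc hrc
    have hsub : (ψ.filter fun m => k + 2 - r - c ≤ m)
        ⊆ ((Finset.Icc 1 k).filter fun m => k + 2 - r - c ≤ m) :=
      Finset.filter_subset_filter _ hψ
    have hsdiff : ((Finset.Icc 1 k \ ψ).filter fun m => k + 2 - r - c ≤ m)
        = ((Finset.Icc 1 k).filter fun m => k + 2 - r - c ≤ m)
          \ (ψ.filter fun m => k + 2 - r - c ≤ m) := by
      ext m
      simp only [Finset.mem_filter, Finset.mem_sdiff]
      tauto
    have hIcc : ((Finset.Icc 1 k).filter fun m => k + 2 - r - c ≤ m)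
        = Finset.Icc (k + 2 - r - c) k := by
      ext m
      simp only [Finset.mem_filter, Finset.mem_Icc]
      omega
    rw [hsdiff, Finset.card_sdiff_of_subset hsub, hIcc, Nat.card_Icc]
    have hψcard : (ψ.filter fun m => k + 2 - r - c ≤ m).card ≤ r + c - 1 := by
      have := Finset.card_le_card hsub
      rw [hIcc, Nat.card_Icc] at this
      omega
    omega
  constructor
  · rintro ⟨⟨hr, hc, hrc⟩, hnot⟩
    refine ⟨hc, hr, by omega, ?_⟩
    have hlt : (ψ.filter fun m => k + 2 - r - c ≤ m).card < c := by
      by_contra h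
      exact hnot ⟨hr, hc, hrc, by omega⟩
    have := key hr hc hrc
    have heq : (fun m => k + 2 - c - r ≤ m) = (fun m => k + 2 - r - c ≤ m) := by
      funext m; simp only [eq_iff_iff]; omega
    simp only [heq]
    omega
  · rintro ⟨hc, hr, hcr, hcard⟩
    have heq : (fun m => k + 2 - c - r ≤ m) = (fun m => k + 2 - r - c ≤ m) := by
      funext m; simp only [eq_iff_iff]; omega
    simp only [heq] at hcard
    have := key hr hc (by omega)
    exact ⟨⟨hr, hc, by omega⟩, fun h => by omega⟩
end
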